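/- Let A be a torsion-free abelian group, let α, μ ∈ A, let k be an integer, and let f : A → A be a group endomorphism such that f(μ) = μ and f(α) = α + k·μ. If for some positive integer n we have Σ_{m=0}^{n-1} f^m(α) = 0, then α = 0. -/
import Mathlib


/-- In a torsion-free abelian group, if `f μ = μ`, `f α = α + k • μ`,
and the sum of the first `n` iterates of `f` applied to `α` vanishes (for some `n > 0`),
then `α = 0`. -/
theorem stmt0 {A : Type*} [AddCommGroup A]
    (htf : ∀ (n : ℤ) (a : A), n ≠ 0 → n • a = 0 → a = 0)
    (α μ : A) (k : ℤ) (f : A →+ A)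
    (hμ : f μ = μ) (hα : f α = α + k • μ)
    (n : ℕ) (hn : 0 < n)
    (hsum : ∑ m ∈ Finset.range n, (⇑f)^[m] α = 0) :
    α = 0 := by
  have key : ∀ m : ℕ, (⇑f)^[m] α = α + ((m : ℤ) * k) • μ := by
    intro m
    induction m with
    | zero => simp
    | succ m ih =>
      rw [Function.iterate_succ_apply', ih, map_add, hα, map_zsmul, hμ]
      push_cast
      rw [add_mul, one_mul, add_smul]
      abel
  -- rewrite the sum
  have hsum' : (n : ℤ) • α + (∑ m ∈ Finset.range n, (m : ℤ) * k) • μ = 0 := by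
    rw [Finset.sum_smul, ← hsum]
    rw [Finset.sum_congr rfl fun m _ => key m, Finset.sum_add_distrib]
    congr 1
    simp
  -- apply f to hsum to get n • (k • μ) = 0
  have h2 : (n : ℤ) • α + ((n : ℤ) * k) • μ + (∑ m ∈ Finset.range n, (m : ℤ) * k) • μ = 0 := by
    have := congrArg f hsum'
    rw [map_add, map_zsmul, map_zsmul, hα, hμ, map_zero] at this
    rw [smul_add, smul_smul] at this
    linear_combination (norm := abel) this
  have hkμ : k • μ = 0 := by
    have hnk : (n : ℤ) • (k • μ) = 0 := by
      rw [smul_smul]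
      linear_combination (norm := abel) h2 - hsum'
    exact htf n (k • μ) (by exact_mod_cast hn.ne') hnk
  have hS : (∑ m ∈ Finset.range n, (m : ℤ) * k) • μ = 0 := by
    have : ∀ m : ℕ, ((m : ℤ) * k) • μ = 0 := fun m => by rw [mul_smul, hkμ, smul_zero]
    rw [Finset.sum_smul]
    exact Finset.sum_eq_zero fun m _ => this m
  have hnα : (n : ℤ) • α = 0 := by
    rw [hS, add_zero] at hsum'
    exact hsum'
  exact htf n α (by exact_mod_cast hn.ne') hnα
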